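/- Let M be a cofinally ultrahomogeneous structure, let A₀, A₁ ⊆ M be finitely generated substructures that are amalgamation bases in the age of M, and suppose k: A₀ → A₁ is an isomorphism. Then there is an automorphism g of M whose restriction to A₀ equals k. -/

import Mathlib

/- Self-contained framework for computable ages and cofinal Fraïssé limits. -/

namespace CFL

open Classical

/-! ### Oracle computability -/

/-- The characteristic partial function of a set of naturals. -/
noncomputable def chi (A : Set ℕ) : ℕ →. ℕ :=
  fun n => Part.some (if n ∈ A then 1 else 0)

/-- Codes for oracle partial recursive functions. -/
inductive OCode : Type
  | zero : OCode
  | succ : OCode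
  | left : OCode
  | right : OCode
  | oracle : OCode
  | pair : OCode → OCode → OCode
  | comp : OCode → OCode → OCode
  | prec : OCode → OCode → OCode
  | rfind' : OCode → OCode

/-- Evaluation of an oracle code relative to an oracle `O`. -/
def OCode.eval (O : ℕ →. ℕ) : OCode → ℕ →. ℕ
  | OCode.zero => pure 0
  | OCode.succ => Nat.succ
  | OCode.left => ↑fun n : ℕ => n.unpair.1
  | OCode.right => ↑fun n : ℕ => n.unpair.2
  | OCode.oracle => O
  | OCode.pair cf cg => fun n => Nat.pair <$> OCode.eval O cf n <*> OCode.eval O cg n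
  | OCode.comp cf cg => fun n => OCode.eval O cg n >>= OCode.eval O cf
  | OCode.prec cf cg =>
    Nat.unpaired fun a n =>
      n.rec (OCode.eval O cf a) fun y IH => do
        let i ← IH
        OCode.eval O cg (Nat.pair a (Nat.pair y i))
  | OCode.rfind' cf =>
    Nat.unpaired fun a m =>
      (Nat.rfind fun n => (fun m => m = 0) <$> OCode.eval O cf (Nat.pair a (n + m))).map
        (· + m)

/-- A numerical code of an `OCode`. -/
def OCode.encodeCode : OCode → ℕ
  | OCode.zero => 0
  | OCode.succ => 1
  | OCode.left => 2
  | OCode.right => 3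
  | OCode.oracle => 4
  | OCode.pair cf cg => 4 * Nat.pair cf.encodeCode cg.encodeCode + 5
  | OCode.comp cf cg => 4 * Nat.pair cf.encodeCode cg.encodeCode + 6
  | OCode.prec cf cg => 4 * Nat.pair cf.encodeCode cg.encodeCode + 7
  | OCode.rfind' cf => 4 * cf.encodeCode + 8

/-- `f` is a partial function recursive in the oracle set `O`. -/
def RecFunIn (O : Set ℕ) (f : ℕ →. ℕ) : Prop :=
  ∃ c : OCode, OCode.eval (chi O) c = f

/-- The code `c` computes the total function `f` relative to the oracle set `O`. -/
def ComputesIn (O : Set ℕ) (c : OCode) (f : ℕ → ℕ) : Prop :=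
  ∀ n, OCode.eval (chi O) c n = Part.some (f n)

/-- `f` is a total function computable in the oracle set `O`. -/
def TotalComputableIn (O : Set ℕ) (f : ℕ → ℕ) : Prop :=
  ∃ c : OCode, ComputesIn O c f

/-- The set `A` is computable in the oracle set `O`. -/
def SetRecIn (O A : Set ℕ) : Prop := RecFunIn O (chi A)

/-- Turing reducibility (on sets of naturals, regarded as representatives of
Turing degrees). -/
def TuringLE (A B : Set ℕ) : Prop := SetRecIn B A

/-- The set `A` is computably enumerable in the oracle set `O`. -/
def CEIn (O A : Set ℕ) : Prop :=
  ∃ c : OCode, ∀ n, n ∈ A ↔ (OCode.eval (chi O) c n).Dom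

/-- The Turing jump of a set of naturals. -/
def jump (O : Set ℕ) : Set ℕ :=
  { e | ∃ c : OCode, c.encodeCode = (Nat.unpair e).1 ∧
      (OCode.eval (chi O) c (Nat.unpair e).2).Dom }

/-- `0'`, the jump of the least degree. -/
def zeroJump : Set ℕ := jump ∅

/-- `0''`. -/
def zeroJump2 : Set ℕ := jump zeroJump

/-- `0'''`. -/
def zeroJump3 : Set ℕ := jump zeroJump2

/-! ### Languages and structures -/

/-- A (coded) first-order language: `relArity r = some k` means that `r` is the code of a
relation symbol of arity `k`, and similarly for function symbols. -/
structure Lang where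
  relArity : ℕ → Option ℕ
  funArity : ℕ → Option ℕ

/-- The language is computably represented. -/
def Lang.ComputableRep (L : Lang) : Prop :=
  TotalComputableIn ∅ (fun r => Encodable.encode (L.relArity r)) ∧
  TotalComputableIn ∅ (fun f => Encodable.encode (L.funArity f))

/-- A finite relational language. -/
def Lang.FiniteRelational (L : Lang) : Prop :=
  (∀ f, L.funArity f = none) ∧ { r | (L.relArity r).isSome = true }.Finite

/-- A finite language. -/
def Lang.FiniteLang (L : Lang) : Prop :=
  { r | (L.relArity r).isSome = true }.Finite ∧
  { f | (L.funArity f).isSome = true }.Finite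

/-- An `L`-structure with underlying set a set of naturals. -/
structure Str (L : Lang) where
  dom : Set ℕ
  rel : ℕ → List ℕ → Prop
  fn : ℕ → List ℕ → ℕ
  rel_valid : ∀ r as, rel r as → L.relArity r = some as.length ∧ ∀ x ∈ as, x ∈ dom
  fn_mem : ∀ f as, L.funArity f = some as.length → (∀ x ∈ as, x ∈ dom) → fn f as ∈ dom

variable {L : Lang}

/-- The (finite) tuple `as` lies in the structure `A`. -/
def TupleIn (A : Str L) (as : List ℕ) : Prop := ∀ x ∈ as, x ∈ A.dom

/-- Membership in the substructure of `A` generated by the tuple `s`. -/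
inductive InClosure (A : Str L) (s : List ℕ) : ℕ → Prop
  | base {x : ℕ} : x ∈ s → x ∈ A.dom → InClosure A s x
  | fn (f : ℕ) (as : List ℕ) : L.funArity f = some as.length →
      (∀ x ∈ as, InClosure A s x) → InClosure A s (A.fn f as)

theorem InClosure.mem_dom {A : Str L} {s : List ℕ} {x : ℕ}
    (h : InClosure A s x) : x ∈ A.dom := by
  induction h with
  | base _ hx => exact hx
  | fn f as ha _ ih => exact A.fn_mem f as ha ih

/-- The substructure of `A` generated by the tuple `s`. -/
def Str.sub (A : Str L) (s : List ℕ) : Str L where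
  dom := { x | InClosure A s x }
  rel r as := A.rel r as ∧ ∀ x ∈ as, InClosure A s x
  fn := A.fn
  rel_valid := fun r as h => ⟨(A.rel_valid r as h.1).1, h.2⟩
  fn_mem := fun f as ha hm => InClosure.fn f as ha hm

/-- `h` is an embedding of `A` into `B`. -/
def IsEmbMap (A B : Str L) (h : ℕ → ℕ) : Prop :=
  (∀ x ∈ A.dom, h x ∈ B.dom) ∧
  (∀ x ∈ A.dom, ∀ y ∈ A.dom, h x = h y → x = y) ∧
  (∀ r as, TupleIn A as → (A.rel r as ↔ B.rel r (as.map h))) ∧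
  (∀ f as, L.funArity f = some as.length → TupleIn A as →
    h (A.fn f as) = B.fn f (as.map h))

/-- `A` embeds into `B`. -/
def Embeds (A B : Str L) : Prop := ∃ h, IsEmbMap A B h

/-- `h` is an isomorphism of `A` onto `B`. -/
def IsIsoMap (A B : Str L) (h : ℕ → ℕ) : Prop :=
  IsEmbMap A B h ∧ ∀ y ∈ B.dom, ∃ x ∈ A.dom, h x = y

/-- `A` and `B` are isomorphic. -/
def Isom (A B : Str L) : Prop := ∃ h, IsIsoMap A B h

/-- `as ∼cl bs`: the coordinatewise map extends to an isomorphism of generated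
substructures. -/
def ClSim (A : Str L) (as : List ℕ) (B : Str L) (bs : List ℕ) : Prop :=
  ∃ h : ℕ → ℕ, as.map h = bs ∧ IsIsoMap (A.sub as) (B.sub bs) h

/-- `as ∼tuple bs`: equal length and the same pattern of equalities among coordinates. -/
def TupleSim (as bs : List ℕ) : Prop :=
  ∃ h h' : ℕ → ℕ, as.map h = bs ∧ bs.map h' = as

/-- `A` is finitely generated. -/
def Str.FG (A : Str L) : Prop :=
  ∃ s : List ℕ, TupleIn A s ∧ ∀ x, x ∈ A.dom ↔ InClosure A s x

/-- `g` is an automorphism of `M`. -/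
def IsAutoOf (M : Str L) (g : ℕ → ℕ) : Prop := IsIsoMap M M g

/-! ### Ages (as isomorphism-closed classes) -/

/-- `B` belongs to the age of `M`, i.e. `B` is isomorphic to a finitely generated
substructure of `M`. -/
def AgeMemOf (M : Str L) (B : Str L) : Prop :=
  ∃ as : List ℕ, TupleIn M as ∧ Isom B (M.sub as)

/-- The age of a structure `M`. -/
def ageOf (M : Str L) : Set (Str L) := { B | AgeMemOf M B }

/-- The hereditary property. -/
def HP (C : Set (Str L)) : Prop :=
  ∀ B ∈ C, ∀ as : List ℕ, TupleIn B as → B.sub as ∈ C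

/-- The joint embedding property. -/
def JEP (C : Set (Str L)) : Prop :=
  ∀ A ∈ C, ∀ B ∈ C, ∃ D ∈ C, Embeds A D ∧ Embeds B D

/-- Every pair of embeddings with domain `A` into members of `C` can be amalgamated
over `A` inside `C`. -/
def AmalgamatesOver (C : Set (Str L)) (A : Str L) : Prop :=
  ∀ B₀ ∈ C, ∀ B₁ ∈ C, ∀ f₀ f₁ : ℕ → ℕ, IsEmbMap A B₀ f₀ → IsEmbMap A B₁ f₁ →
    ∃ D ∈ C, ∃ g₀ g₁ : ℕ → ℕ, IsEmbMap B₀ D g₀ ∧ IsEmbMap B₁ D g₁ ∧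
      ∀ x ∈ A.dom, g₀ (f₀ x) = g₁ (f₁ x)

/-- The amalgamation property. -/
def AP (C : Set (Str L)) : Prop := ∀ A ∈ C, AmalgamatesOver C A

/-- `A` is an amalgamation base of the class `C`. -/
def AmalgBase (C : Set (Str L)) (A : Str L) : Prop := A ∈ C ∧ AmalgamatesOver C A

/-- The cofinal amalgamation property. -/
def CoAP (C : Set (Str L)) : Prop :=
  ∀ A ∈ C, ∃ A' : Str L, AmalgBase C A' ∧ Embeds A A'

/-! ### Computable ages -/

/-- An (abstract) enumerated age: for each index `i`, a generating tuple `tup i` and the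
structure `str i` it generates. -/
structure CompAge (L : Lang) where
  tup : ℕ → List ℕ
  str : ℕ → Str L
  tup_mem : ∀ i, TupleIn (str i) (tup i)
  gen : ∀ i x, x ∈ (str i).dom ↔ InClosure (str i) (tup i) x

/-- The class of structures represented by the enumerated age `K`. -/
def CompAge.cls (K : CompAge L) : Set (Str L) := { B | ∃ i, Isom B (K.str i) }

/-- The structure `M` is computable in the oracle set `s`. -/
def StrComputableIn (s : Set ℕ) (M : Str L) : Prop :=
  SetRecIn s M.dom ∧
  SetRecIn s { p | ∃ r as, TupleIn M as ∧ M.rel r as ∧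
      p = Nat.pair r (Encodable.encode as) } ∧
  SetRecIn s { p | ∃ f as b, L.funArity f = some as.length ∧ TupleIn M as ∧
      M.fn f as = b ∧ p = Nat.pair f (Nat.pair (Encodable.encode as) b) }

/-- The coded diagram of an enumerated age. -/
def CompAge.diag (K : CompAge L) : Set ℕ :=
  { p | ∃ i, p = Nat.pair 0 (Nat.pair i (Encodable.encode (K.tup i))) } ∪
  { p | ∃ i x, x ∈ (K.str i).dom ∧ p = Nat.pair 1 (Nat.pair i x) } ∪
  { p | ∃ i r as, TupleIn (K.str i) as ∧ (K.str i).rel r as ∧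
      p = Nat.pair 2 (Nat.pair i (Nat.pair r (Encodable.encode as))) } ∪
  { p | ∃ i r as, TupleIn (K.str i) as ∧ L.relArity r = some as.length ∧
      ¬ (K.str i).rel r as ∧
      p = Nat.pair 3 (Nat.pair i (Nat.pair r (Encodable.encode as))) } ∪
  { p | ∃ i f as b, TupleIn (K.str i) as ∧ L.funArity f = some as.length ∧
      (K.str i).fn f as = b ∧
      p = Nat.pair 4 (Nat.pair i (Nat.pair f (Nat.pair (Encodable.encode as) b))) }

/-- `K` is an `s`-computable age: its diagram is c.e. in `s` and each of its structures
is computable in `s`. -/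
def AgeComputableIn (s : Set ℕ) (K : CompAge L) : Prop :=
  CEIn s K.diag ∧ ∀ i, StrComputableIn s (K.str i)

/-- The embedding information of an enumerated age, as a set of naturals. -/
def EmbedInfo (K : CompAge L) : Set ℕ :=
  { p | ∃ k₀ b₀ k₁ b₁, TupleIn (K.str k₀) b₀ ∧ TupleIn (K.str k₁) b₁ ∧
      ClSim (K.str k₀) b₀ (K.str k₁) b₁ ∧
      p = Nat.pair k₀ (Nat.pair (Encodable.encode b₀)
            (Nat.pair k₁ (Encodable.encode b₁))) }

/-! ### Potential embeddings, spans, and amalgamation diagrams -/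

/-- A potential embedding: a pair of indices and a tuple in the codomain structure. -/
structure PotEmb where
  i : ℕ
  j : ℕ
  c : List ℕ

/-- A numerical code of a potential embedding. -/
def PotEmb.code (F : PotEmb) : ℕ :=
  Nat.pair F.i (Nat.pair F.j (Encodable.encode F.c))

/-- The potential embedding is well-formed with respect to `K`. -/
def PotEmb.Valid (K : CompAge L) (F : PotEmb) : Prop :=
  F.c.length = (K.tup F.i).length ∧ TupleIn (K.str F.j) F.c

/-- The potential embedding is an embedding. -/
def PotEmb.IsEmb (K : CompAge L) (F : PotEmb) : Prop :=
  ClSim (K.str F.i) (K.tup F.i) (K.str F.j) F.c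

/-- The potential embedding is an isomorphism (its range generates the codomain). -/
def PotEmb.IsIso (K : CompAge L) (F : PotEmb) : Prop :=
  F.IsEmb K ∧ ∀ x ∈ (K.str F.j).dom, InClosure (K.str F.j) F.c x

/-- `h` realizes the potential embedding `F` as a map on the domain structure. -/
def ExtMap (K : CompAge L) (F : PotEmb) (h : ℕ → ℕ) : Prop :=
  (K.tup F.i).map h = F.c ∧ IsEmbMap (K.str F.i) (K.str F.j) h

/-- `(F₀, F₁)` is a potential span. -/
def PotSpan (K : CompAge L) (F₀ F₁ : PotEmb) : Prop :=
  F₀.Valid K ∧ F₁.Valid K ∧ F₀.i = F₁.i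

/-- `(G₀, G₁)` is an amalgamation diagram over the potential span `(F₀, F₁)`. -/
def AmalgDiagOver (K : CompAge L) (F₀ F₁ G₀ G₁ : PotEmb) : Prop :=
  G₀.Valid K ∧ G₁.Valid K ∧ G₀.IsEmb K ∧
  G₀.i = F₀.j ∧ G₁.i = F₁.j ∧ G₀.j = G₁.j ∧
  (F₀.IsEmb K → F₁.IsEmb K → G₁.IsEmb K ∧
    ∀ h₀ h₁ : ℕ → ℕ, ExtMap K G₀ h₀ → ExtMap K G₁ h₁ →
      F₀.c.map h₀ = F₁.c.map h₁)

/-- `H` is the composition `F ∘ G` of potential embeddings (where `F` is an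
embedding realized by any `h` extending it). -/
def CompRel (K : CompAge L) (F G H : PotEmb) : Prop :=
  G.j = F.i ∧ H.i = G.i ∧ H.j = F.j ∧
  ∀ h : ℕ → ℕ, ExtMap K F h → H.c = G.c.map h

/-! ### Computable versions of HP, JEP, AP, coAP -/

/-- The `s`-computable hereditary property. -/
def CHP (s : Set ℕ) (K : CompAge L) : Prop :=
  ∃ c : OCode, ∀ i (b : List ℕ), TupleIn (K.str i) b →
    ∃ j, OCode.eval (chi s) c (Nat.pair i (Encodable.encode b)) = Part.some j ∧
      ClSim (K.str j) (K.tup j) (K.str i) b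

/-- The `s`-computable joint embedding property. -/
def CJEP (s : Set ℕ) (K : CompAge L) : Prop :=
  ∃ c : OCode, ∀ i j : ℕ, ∃ F G : PotEmb,
    OCode.eval (chi s) c (Nat.pair i j) = Part.some (Nat.pair F.code G.code) ∧
    F.Valid K ∧ G.Valid K ∧ F.IsEmb K ∧ G.IsEmb K ∧
    F.i = i ∧ G.i = j ∧ F.j = G.j

/-- The `s`-computable amalgamation property. -/
def CAP (s : Set ℕ) (K : CompAge L) : Prop :=
  ∃ c : OCode, ∀ F₀ F₁ : PotEmb, PotSpan K F₀ F₁ →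
    ∃ G₀ G₁ : PotEmb,
      OCode.eval (chi s) c (Nat.pair F₀.code F₁.code) =
        Part.some (Nat.pair G₀.code G₁.code) ∧
      AmalgDiagOver K F₀ F₁ G₀ G₁

/-- A family `W` of distinguished embeddings with amalgamation-base codomains, closed
under pre/post composition with isomorphisms, covering all domains. -/
def IsCoAPFamily (K : CompAge L) (W : Set PotEmb) : Prop :=
  (∀ F ∈ W, F.Valid K ∧ F.IsEmb K ∧ AmalgBase K.cls (K.str F.j)) ∧
  (∀ F ∈ W, ∀ G H : PotEmb, G.Valid K → G.IsIso K → G.j = F.i →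
      CompRel K F G H → H ∈ W) ∧
  (∀ F ∈ W, ∀ G H : PotEmb, G.Valid K → G.IsIso K → G.i = F.j →
      CompRel K G F H → H ∈ W) ∧
  (∀ i : ℕ, ∃ F ∈ W, F.i = i)

/-- The `s`-computable cofinal amalgamation property: there is an `s`-c.e. family of
distinguished embeddings onto amalgamation bases together with an `s`-computable
amalgamation function. -/
def CcoAP (s : Set ℕ) (K : CompAge L) : Prop :=
  ∃ W : Set PotEmb, IsCoAPFamily K W ∧
    CEIn s { p | ∃ F ∈ W, p = F.code } ∧
    ∃ c : OCode, ∀ F ∈ W, ∀ G₀ G₁ : PotEmb,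
      G₀.Valid K → G₁.Valid K → G₀.i = F.j → G₁.i = F.j →
      ∃ D₀ D₁ : PotEmb,
        OCode.eval (chi s) c (Nat.pair F.code (Nat.pair G₀.code G₁.code)) =
          Part.some (Nat.pair D₀.code D₁.code) ∧
        AmalgDiagOver K G₀ G₁ D₀ D₁

/-! ### Ultrahomogeneity -/

/-- `M` is ultrahomogeneous: every isomorphism between finitely generated substructures
extends to an automorphism. -/
def Ultrahomogeneous (M : Str L) : Prop :=
  ∀ as bs : List ℕ, TupleIn M as → TupleIn M bs → ClSim M as M bs →
    ∃ g : ℕ → ℕ, IsAutoOf M g ∧ as.map g = bs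

/-- `g` is a bijection of the underlying set of `M` with itself. -/
def BijOnDom (M : Str L) (g : ℕ → ℕ) : Prop :=
  (∀ x ∈ M.dom, g x ∈ M.dom) ∧
  (∀ x ∈ M.dom, ∀ y ∈ M.dom, g x = g y → x = y) ∧
  (∀ y ∈ M.dom, ∃ x ∈ M.dom, g x = y)

/-- `M` is `s`-computably ultrahomogeneous. -/
def CompUltrahom (s : Set ℕ) (M : Str L) : Prop :=
  ∃ c : OCode, ∀ as bs : List ℕ, TupleIn M as → TupleIn M bs →
    as.length = bs.length →
    ∃ e : ℕ,
      OCode.eval (chi s) c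
          (Nat.pair (Encodable.encode as) (Encodable.encode bs)) = Part.some e ∧
      ∃ c' : OCode, c'.encodeCode = e ∧ ∃ g : ℕ → ℕ, ComputesIn s c' g ∧
        BijOnDom M g ∧
        (ClSim M as M bs → IsAutoOf M g ∧ as.map g = bs)

/-! ### Cofinal ultrahomogeneity -/

/-- `M` is cofinally ultrahomogeneous. -/
def CofinallyUltrahomogeneous (M : Str L) : Prop :=
  ∀ as : List ℕ, TupleIn M as → ∃ bs : List ℕ, TupleIn M bs ∧
    (∀ x ∈ as, InClosure M bs x) ∧
    ∀ cs : List ℕ, TupleIn M cs → ClSim M bs M cs →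
      ∃ g : ℕ → ℕ, IsAutoOf M g ∧ bs.map g = cs

/-- `E` is a cofinal collection of tuples in `M`. -/
def IsCofinalCollection (M : Str L) (E : Set (List ℕ)) : Prop :=
  (∀ bs ∈ E, TupleIn M bs) ∧
  (∀ as : List ℕ, TupleIn M as → ∃ bs ∈ E, ∀ x ∈ as, InClosure M bs x) ∧
  (∀ bs ∈ E, ∀ as : List ℕ, (∀ x ∈ as, InClosure M bs x) → (as ++ bs) ∈ E) ∧
  (∀ as ∈ E, ∀ bs : List ℕ, TupleIn M bs → ClSim M as M bs → bs ∈ E)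

/-- `M` is cofinally ultrahomogeneous for the collection `E`: every isomorphism between
substructures generated by members of `E` extends to an automorphism. -/
def CofUltraFor (M : Str L) (E : Set (List ℕ)) : Prop :=
  ∀ as ∈ E, ∀ bs ∈ E, ClSim M as M bs →
    ∃ g : ℕ → ℕ, IsAutoOf M g ∧ as.map g = bs

/-- The set of codes of members of `E`. -/
def ECodes (E : Set (List ℕ)) : Set ℕ := { p | ∃ as ∈ E, p = Encodable.encode as }

/-- The functional part of `s`-computable cofinal ultrahomogeneity with respect to `E`. -/
def CofUltraFunIn (s : Set ℕ) (M : Str L) (E : Set (List ℕ)) : Prop :=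
  ∃ c : OCode, ∀ as ∈ E, ∀ bs : List ℕ, TupleIn M bs → TupleSim as bs →
    ∃ e : ℕ,
      OCode.eval (chi s) c
          (Nat.pair (Encodable.encode as) (Encodable.encode bs)) = Part.some e ∧
      ∃ c' : OCode, c'.encodeCode = e ∧ ∃ g : ℕ → ℕ, ComputesIn s c' g ∧
        BijOnDom M g ∧ as.map g = bs ∧
        (ClSim M as M bs → IsAutoOf M g)

/-- `M` is `s`-computably cofinally ultrahomogeneous with respect to `E`. -/
def CompCofUltrahomWrt (s : Set ℕ) (M : Str L) (E : Set (List ℕ)) : Prop :=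
  IsCofinalCollection M E ∧ SetRecIn s (ECodes E) ∧ CofUltraFunIn s M E

/-- `M` is `s`-computably cofinally ultrahomogeneous. -/
def CompCofUltrahom (s : Set ℕ) (M : Str L) : Prop :=
  ∃ E : Set (List ℕ), CompCofUltrahomWrt s M E

/-- The `s`-computable cofinal extension property with respect to `E`. -/
def CompCofExtProp (s : Set ℕ) (M : Str L) (E : Set (List ℕ)) : Prop :=
  ∃ c : OCode, ∀ as bs cs : List ℕ, as ∈ E → cs ∈ E → TupleIn M bs →
    (∀ x ∈ as, InClosure M cs x) → TupleSim as bs →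
    ∃ ds : List ℕ,
      OCode.eval (chi s) c
          (Nat.pair (Encodable.encode as)
            (Nat.pair (Encodable.encode bs) (Encodable.encode cs))) =
        Part.some (Encodable.encode ds) ∧
      TupleIn M ds ∧ TupleSim (as ++ cs) (bs ++ ds) ∧
      (ClSim M as M bs →
        ClSim M ds M cs ∧ (∀ x ∈ bs, InClosure M ds x) ∧
        ∀ h h' : ℕ → ℕ,
          ds.map h = cs → IsIsoMap (M.sub ds) (M.sub cs) h →
          bs.map h' = as → IsIsoMap (M.sub bs) (M.sub as) h' →
          bs.map h = bs.map h')

/-! ### Canonical ages and limits -/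

/-- `K` is a canonical age of `M` (relative to the oracle `t`): the enumeration of
generating tuples is `t`-computable, lists every finite tuple of `M` infinitely often,
and `str i` is the substructure generated by `tup i`. -/
def IsCanonicalAgeOf (t : Set ℕ) (K : CompAge L) (M : Str L) : Prop :=
  TotalComputableIn t (fun i => Encodable.encode (K.tup i)) ∧
  (∀ i, TupleIn M (K.tup i)) ∧
  (∀ as : List ℕ, TupleIn M as → ∀ n : ℕ, ∃ i, n ≤ i ∧ K.tup i = as) ∧
  (∀ i, K.str i = M.sub (K.tup i))

/-- `K` represents the age of `M`. -/
def RepresentsAgeOf (K : CompAge L) (M : Str L) : Prop :=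
  (∀ i, AgeMemOf M (K.str i)) ∧
  (∀ B : Str L, AgeMemOf M B → ∃ i, Isom B (K.str i))

/-- `M` is a cofinal Fraïssé limit of (the age represented by) `K`. -/
def CofinalFraisseLimitOf (K : CompAge L) (M : Str L) : Prop :=
  CofinallyUltrahomogeneous M ∧ RepresentsAgeOf K M

/-- The enumerated age `K` is uniformly finite. -/
def UniformlyFinite (K : CompAge L) : Prop :=
  L.FiniteLang ∧ ∃ f : ℕ → ℕ, TotalComputableIn ∅ f ∧
    ∀ i, ∀ as : List ℕ, TupleIn (K.str i) as →
      { x | InClosure (K.str i) as x }.Finite ∧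
      { x | InClosure (K.str i) as x }.ncard ≤ f as.length

/-! Let `B = ⟨bs⟩` be a finitely generated substructure containing `A₀ ∪ A₁` whose
isomorphisms onto substructures of `M` extend to automorphisms. The inclusion `A₀ ⊆ B` and
`k` followed by `A₁ ⊆ B` are two embeddings of `A₀` into `B`; amalgamating them over the
amalgamation base `A₀` and realizing the amalgam inside `M` yields embeddings
`e₀, e₁ : B → M` with `e₀ = e₁ ∘ k` on `A₀`. Both extend to automorphisms `α, β` of `M`,
and `β⁻¹ ∘ α` extends `k`. -/

theorem TupleIn.map {A B : Str L} {f : ℕ → ℕ} (hf : Set.MapsTo f A.dom B.dom)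
    {as : List ℕ} (has : TupleIn A as) : TupleIn B (as.map f) := by
  simpa [TupleIn] using fun x hx => hf (has x hx)

theorem InClosure.mono {M : Str L} {s t : List ℕ} (hst : ∀ x ∈ s, InClosure M t x)
    {x : ℕ} (hx : InClosure M s x) : InClosure M t x := by
  induction hx with
  | base hxs _ => exact hst _ hxs
  | fn f as ha _ ih => exact .fn f as ha ih

theorem IsEmbMap.comp {A B C : Str L} {f g : ℕ → ℕ}
    (hg : IsEmbMap B C g) (hf : IsEmbMap A B f) : IsEmbMap A C (g ∘ f) := by
  obtain ⟨hf_maps, hf_inj, hf_rel, hf_fn⟩ := hf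
  obtain ⟨hg_maps, hg_inj, hg_rel, hg_fn⟩ := hg
  refine ⟨Set.MapsTo.comp hg_maps hf_maps, Set.InjOn.comp hg_inj hf_inj hf_maps,
    fun r as has => ?_, fun fn as ha has => ?_⟩
  · rw [hf_rel r as has, hg_rel r _ (has.map hf_maps), List.map_map]
  · rw [Function.comp_apply, hf_fn fn as ha has,
      hg_fn fn _ (by simpa using ha) (has.map hf_maps), List.map_map]

theorem isIsoMap_id (A : Str L) : IsIsoMap A A id :=
  ⟨⟨fun _ hx => hx, fun _ _ _ _ h => h, by simp, by simp⟩, fun y hy => ⟨y, hy, rfl⟩⟩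

theorem isEmbMap_id_sub (M : Str L) (s : List ℕ) : IsEmbMap (M.sub s) M id :=
  ⟨fun _ hx => hx.mem_dom, fun _ _ _ _ h => h,
    fun _ _ has => by simp only [Str.sub, List.map_id]; exact ⟨And.left, fun h => ⟨h, has⟩⟩,
    by simp [Str.sub]⟩

theorem isEmbMap_id_sub_sub {M : Str L} {s t : List ℕ} (hst : ∀ x ∈ s, InClosure M t x) :
    IsEmbMap (M.sub s) (M.sub t) id :=
  ⟨fun _ hx => hx.mono hst, fun _ _ _ _ h => h,
    fun _ _ has => by
      simp only [Str.sub, List.map_id]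
      exact ⟨fun h => ⟨h.1, fun x hx => (has x hx).mono hst⟩, fun h => ⟨h.1, has⟩⟩,
    by simp [Str.sub]⟩

theorem sub_mem_ageOf {M : Str L} {s : List ℕ} (hs : TupleIn M s) : M.sub s ∈ ageOf M :=
  ⟨s, hs, id, isIsoMap_id _⟩

theorem AgeMemOf.exists_isEmbMap {M D : Str L} (hD : AgeMemOf M D) :
    ∃ θ : ℕ → ℕ, IsEmbMap D M θ := by
  obtain ⟨s, _, θ, hθ⟩ := hD
  exact ⟨θ, (isEmbMap_id_sub M s).comp hθ.1⟩

theorem AmalgamatesOver.exists_isEmbMap_of_ageOf {M A B₀ B₁ : Str L} {f₀ f₁ : ℕ → ℕ}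
    (hA : AmalgamatesOver (ageOf M) A) (hB₀ : B₀ ∈ ageOf M) (hB₁ : B₁ ∈ ageOf M)
    (hf₀ : IsEmbMap A B₀ f₀) (hf₁ : IsEmbMap A B₁ f₁) :
    ∃ e₀ e₁ : ℕ → ℕ, IsEmbMap B₀ M e₀ ∧ IsEmbMap B₁ M e₁ ∧
      ∀ x ∈ A.dom, e₀ (f₀ x) = e₁ (f₁ x) := by
  obtain ⟨D, hD, g₀, g₁, hg₀, hg₁, hg⟩ := hA B₀ hB₀ B₁ hB₁ f₀ f₁ hf₀ hf₁
  obtain ⟨θ, hθ⟩ := AgeMemOf.exists_isEmbMap hD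
  exact ⟨θ ∘ g₀, θ ∘ g₁, hθ.comp hg₀, hθ.comp hg₁, fun x hx => congrArg θ (hg x hx)⟩

section SubEmbedding

variable {M B : Str L} {s : List ℕ} {e : ℕ → ℕ}

theorem IsEmbMap.eq_of_eq_on_generators {e' : ℕ → ℕ} (he : IsEmbMap (M.sub s) B e)
    (he' : IsEmbMap (M.sub s) B e') (hs : ∀ x ∈ s, e x = e' x) {x : ℕ}
    (hx : InClosure M s x) : e x = e' x := by
  induction hx with
  | base hxs _ => exact hs _ hxs
  | fn fn as ha hcl ih =>
    calc e (M.fn fn as) = B.fn fn (as.map e) := he.2.2.2 fn as ha hcl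
      _ = B.fn fn (as.map e') := by rw [List.map_congr_left ih]
      _ = e' (M.fn fn as) := (he'.2.2.2 fn as ha hcl).symm

theorem IsEmbMap.inClosure_map (he : IsEmbMap (M.sub s) M e) {x : ℕ}
    (hx : InClosure M s x) : InClosure M (s.map e) (e x) := by
  induction hx with
  | base hxs hxd => exact .base (List.mem_map_of_mem hxs) (he.1 _ (.base hxs hxd))
  | fn fn as ha hcl ih =>
    rw [show e (M.fn fn as) = M.fn fn (as.map e) from he.2.2.2 fn as ha hcl]
    exact .fn fn _ (by simpa using ha) (by simpa using ih)

theorem IsEmbMap.surjOn_closure_map (hs : TupleIn M s) (he : IsEmbMap (M.sub s) M e) :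
    Set.SurjOn e {x | InClosure M s x} {y | InClosure M (s.map e) y} := by
  intro y hy
  induction hy with
  | base hys _ =>
    obtain ⟨x, hx, rfl⟩ := List.mem_map.1 hys
    exact ⟨x, .base hx (hs x hx), rfl⟩
  | fn fn as ha _ ih =>
    set xs := as.map (Function.invFunOn e {x | InClosure M s x})
    have hxs : xs.map e = as := by
      rw [List.map_map]
      exact (List.map_congr_left fun y hy => Function.invFunOn_eq (ih y hy)).trans
        (List.map_id as)
    have hmem : ∀ x ∈ xs, InClosure M s x := by
      simpa [xs] using fun y hy => Function.invFunOn_mem (ih y hy)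
    have ha' : L.funArity fn = some xs.length := by simpa [xs] using ha
    exact ⟨M.fn fn xs, .fn fn xs ha' hmem, by rw [← hxs]; exact he.2.2.2 fn xs ha' hmem⟩

theorem IsEmbMap.isIsoMap_sub_map (hs : TupleIn M s) (he : IsEmbMap (M.sub s) M e) :
    IsIsoMap (M.sub s) (M.sub (s.map e)) e := by
  refine ⟨⟨fun x hx => he.inClosure_map hx, he.2.1, fun r as has => ?_, he.2.2.2⟩,
    he.surjOn_closure_map hs⟩
  have hrel := he.2.2.1 r as has
  exact ⟨fun h => ⟨hrel.1 h, by simpa using fun x hx => he.inClosure_map (has x hx)⟩,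
    fun h => hrel.2 h.1⟩

end SubEmbedding

section Automorphism

variable {M : Str L} {f g : ℕ → ℕ}

theorem IsAutoOf.comp (hg : IsAutoOf M g) (hf : IsAutoOf M f) : IsAutoOf M (g ∘ f) :=
  ⟨hg.1.comp hf.1, Set.SurjOn.comp hg.2 hf.2⟩

theorem IsAutoOf.bijOn (hg : IsAutoOf M g) : Set.BijOn g M.dom M.dom :=
  ⟨hg.1.1, hg.1.2.1, hg.2⟩

theorem IsAutoOf.invFunOn (hg : IsAutoOf M g) :
    IsAutoOf M (Function.invFunOn g M.dom) := by
  set g' := Function.invFunOn g M.dom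
  have hinv : Set.InvOn g' g M.dom M.dom := hg.bijOn.invOn_invFunOn
  have hmaps : Set.MapsTo g' M.dom M.dom := Set.SurjOn.mapsTo_invFunOn hg.2
  have hbij : Set.BijOn g' M.dom M.dom := hinv.symm.bijOn hmaps hg.1.1
  have hmap_map : ∀ as, TupleIn M as → (as.map g').map g = as := fun as has => by
    rw [List.map_map]
    exact (List.map_congr_left fun a ha => hinv.2.eq (has a ha)).trans (List.map_id as)
  refine ⟨⟨hmaps, hbij.injOn, fun r as has => ?_, fun fn as ha has => ?_⟩, hbij.surjOn⟩
  · rw [hg.1.2.2.1 r _ (has.map hmaps), hmap_map as has]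
  · have ha' : L.funArity fn = some (as.map g').length := by simpa using ha
    refine hg.1.2.1 _ (hmaps (M.fn_mem fn as ha has)) _ (M.fn_mem fn _ ha' (has.map hmaps)) ?_
    rw [hinv.2.eq (M.fn_mem fn as ha has), hg.1.2.2.2 fn _ ha' (has.map hmaps),
      hmap_map as has]

end Automorphism

theorem exists_isAutoOf_eq_on_closure {M : Str L} {bs : List ℕ} (hbs : TupleIn M bs)
    (hext : ∀ cs : List ℕ, TupleIn M cs → ClSim M bs M cs →
      ∃ g : ℕ → ℕ, IsAutoOf M g ∧ bs.map g = cs)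
    {e : ℕ → ℕ} (he : IsEmbMap (M.sub bs) M e) :
    ∃ g : ℕ → ℕ, IsAutoOf M g ∧ ∀ x, InClosure M bs x → g x = e x := by
  have himage : TupleIn M (bs.map e) :=
    TupleIn.map he.1 fun x hx => .base hx (hbs x hx)
  obtain ⟨g, hg, hgbs⟩ := hext _ himage ⟨e, rfl, he.isIsoMap_sub_map hbs⟩
  exact ⟨g, hg, fun x hx =>
    (hg.1.comp (isEmbMap_id_sub M bs)).eq_of_eq_on_generators he (List.map_inj_left.1 hgbs) hx⟩

theorem iso_of_amalg_bases_extends_general {L : Lang} (M : Str L)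
    (hM : CofinallyUltrahomogeneous M)
    (as₀ as₁ : List ℕ) (h₀ : TupleIn M as₀) (h₁ : TupleIn M as₁)
    (hb₀ : AmalgBase (ageOf M) (M.sub as₀))
    (k : ℕ → ℕ) (hk : IsIsoMap (M.sub as₀) (M.sub as₁) k) :
    ∃ g : ℕ → ℕ, IsAutoOf M g ∧ ∀ x, InClosure M as₀ x → g x = k x := by
  obtain ⟨bs, hbs, hcover, hext⟩ :=
    hM (as₀ ++ as₁) fun x hx => (List.mem_append.1 hx).elim (h₀ x) (h₁ x)
  have hcover₀ : ∀ x ∈ as₀, InClosure M bs x := fun x hx => hcover x (List.mem_append_left _ hx)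
  have hcover₁ : ∀ x ∈ as₁, InClosure M bs x := fun x hx => hcover x (List.mem_append_right _ hx)
  have hB : M.sub bs ∈ ageOf M := sub_mem_ageOf hbs
  obtain ⟨e₀, e₁, he₀, he₁, hagree⟩ := hb₀.2.exists_isEmbMap_of_ageOf hB hB
    (isEmbMap_id_sub_sub hcover₀) ((isEmbMap_id_sub_sub hcover₁).comp hk.1)
  obtain ⟨α, hα, hαe⟩ := exists_isAutoOf_eq_on_closure hbs hext he₀
  obtain ⟨β, hβ, hβe⟩ := exists_isAutoOf_eq_on_closure hbs hext he₁
  refine ⟨Function.invFunOn β M.dom ∘ α, hβ.invFunOn.comp hα, fun x hx => ?_⟩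
  have hαβ : α x = β (k x) := by
    rw [hαe x (hx.mono hcover₀), hβe (k x) ((hk.1.1 x hx).mono hcover₁)]
    exact hagree x hx
  rw [Function.comp_apply, hαβ]
  exact hβ.bijOn.invOn_invFunOn.1.eq (hk.1.1 x hx).mem_dom

/-- In a cofinally ultrahomogeneous structure, every isomorphism
between finitely generated substructures that are amalgamation bases in the age extends
to an automorphism. -/
theorem iso_of_amalg_bases_extends {L : Lang} (M : Str L)
    (hM : CofinallyUltrahomogeneous M)
    (as₀ as₁ : List ℕ) (h₀ : TupleIn M as₀) (h₁ : TupleIn M as₁)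
    (hb₀ : AmalgBase (ageOf M) (M.sub as₀))
    (hb₁ : AmalgBase (ageOf M) (M.sub as₁))
    (k : ℕ → ℕ) (hk : IsIsoMap (M.sub as₀) (M.sub as₁) k) :
    ∃ g : ℕ → ℕ, IsAutoOf M g ∧ ∀ x, InClosure M as₀ x → g x = k x :=
  iso_of_amalg_bases_extends_general M hM as₀ as₁ h₀ h₁ hb₀ k hk

end CFL
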